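/- In the setting of the randomized partition (blocks P_1, …, P_m built from independent β_1, …, β_m with density f of dist(diam(P), n)), set L = log₂ n, fix y ∈ Z and 0 ≤ r ≤ diam(P)/(16 L), and fix an index i. Let x_i = min{d(p_i, q) : q ∈ Z, d(q,y) ≤ r}. If x_i < diam(P)/8 + (L−2)·diam(P)/(8L) (i.e., p_i is 'near' the ball B(y,r)), then Pr[P_i non-terminally intersects B(y,r)] ≤ (32 r L / diam(P)) · Pr[P_i terminally intersects B(y,r)]. -/

import Mathlib

/-!
Write `δ = diam P`, `B = B(y, r)` and `x` for the distance from `p_i` to `B`; every point of `B`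
lies within `x + 2r` of `p_i`. If `P_i` meets `B` non-terminally, then `β_i ∈ [x, x + 2r)` and some
point of `P ∩ B` is left uncovered by `P_1, …, P_{i-1}`. Conversely, such an uncovered point
together with `β_i ≥ x + 2r` makes `P_i` swallow all the rest of `B`, i.e. meet it terminally.
The uncovered-point event is determined by `β_1, …, β_{i-1}`, hence independent of `β_i`, so it
suffices to compare `Pr[β_i ∈ [x, x + 2r)]` with `Pr[β_i ≥ x + 2r]`.

The density is `8L/δ · 2^{-(k+1)}` on the `k`-th piece (of width `δ/(8L) ≥ 2r`) of `[δ/8, δ/4]`,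
except on the last piece, where it is doubled; hence the mass to the right of the start of the
`k`-th piece is exactly `2^{-k}`. If `k` is the piece of `x`, then `x + 2r` lies at most in piece
`k + 1`, which is not the last one because `p_i` is near `B`. So the first probability is at most
`2r · 8L/δ · 2^{-(k+1)}`, and the second is at least `2^{-(k+2)}`.
-/

open MeasureTheory

/-- The density `f` of the distribution `dist(δ, k)` where `k = 2^L`. -/
noncomputable def distDensity (δ : ℝ) (L : ℕ) (x : ℝ) : ℝ :=
  if x < δ/8 ∨ δ/4 < x then 0
  else if δ/4 - δ/(8*(L:ℝ)) ≤ x then (8*(L:ℝ)/δ) * (2 / 2^L)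
  else (8*(L:ℝ)/δ) * (1/2 : ℝ) ^ ((⌊(x - δ/8) / (δ/(8*(L:ℝ)))⌋).toNat + 1)

open Set Metric

def IsGreedyPartition {Z ι : Type*} [LT ι] (P : Set Z) (C blk : ι → Set Z) : Prop :=
  ∀ i, blk i = {x | x ∈ P ∧ (∀ j, j < i → x ∉ blk j) ∧ x ∈ C i}

namespace IsGreedyPartition

variable {Z ι : Type*} [Preorder ι] {P B : Set Z} {C blk : ι → Set Z} {x : Z} {i : ι}

theorem mem_iff (h : IsGreedyPartition P C blk) :
    x ∈ blk i ↔ x ∈ P ∧ (∀ j, j < i → x ∉ blk j) ∧ x ∈ C i := by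
  rw [h i]; rfl

theorem exists_le_mem (h : IsGreedyPartition P C blk) (hxP : x ∈ P) (hxC : x ∈ C i) :
    ∃ k ≤ i, x ∈ blk k := by
  by_contra! hx
  exact hx i le_rfl (h.mem_iff.2 ⟨hxP, fun k hk => hx k hk.le, hxC⟩)

theorem notMem_of_lt (h : IsGreedyPartition P C blk) {j k : ι} (hjk : j < k) (hk : x ∈ blk k) :
    x ∉ blk j :=
  (h.mem_iff.1 hk).2.1 j hjk

theorem forall_lt_notMem_iff (h : IsGreedyPartition P C blk) (hxP : x ∈ P) :
    (∀ k, k < i → x ∉ blk k) ↔ ∀ k, k < i → x ∉ C k := by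
  refine ⟨fun hx k hk hxC => ?_, fun hx k hk hxk => hx k hk (h.mem_iff.1 hxk).2.2⟩
  obtain ⟨k', hk', hxk'⟩ := h.exists_le_mem hxP hxC
  exact hx k' (hk'.trans_lt hk) hxk'

theorem of_nonterminal (h : IsGreedyPartition P C blk) {j : ι} (hi : (blk i ∩ B).Nonempty)
    (hij : i < j) (hj : (blk j ∩ B).Nonempty) :
    (∃ z ∈ P ∩ B, ∀ k, k < i → z ∉ C k) ∧ (B ∩ C i).Nonempty ∧ ¬ B ⊆ C i := by
  obtain ⟨z, hzi, hzB⟩ := hi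
  obtain ⟨hzP, hzpre, hzC⟩ := h.mem_iff.1 hzi
  obtain ⟨z', hz'j, hz'B⟩ := hj
  refine ⟨⟨z, ⟨hzP, hzB⟩, (h.forall_lt_notMem_iff hzP).1 hzpre⟩, ⟨z, hzB, hzC⟩,
    fun hBC => ?_⟩
  obtain ⟨k, hki, hz'k⟩ := h.exists_le_mem (h.mem_iff.1 hz'j).1 (hBC hz'B)
  exact h.notMem_of_lt (hki.trans_lt hij) hz'j hz'k

theorem terminal (h : IsGreedyPartition P C blk) (hfree : ∃ z ∈ P ∩ B, ∀ k, k < i → z ∉ C k)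
    (hBC : B ⊆ C i) : (blk i ∩ B).Nonempty ∧ ∀ j, i < j → ¬ (blk j ∩ B).Nonempty := by
  obtain ⟨z, ⟨hzP, hzB⟩, hzfree⟩ := hfree
  refine ⟨⟨z, h.mem_iff.2 ⟨hzP, (h.forall_lt_notMem_iff hzP).2 hzfree, hBC hzB⟩, hzB⟩, ?_⟩
  rintro j hij ⟨z', hz'j, hz'B⟩
  obtain ⟨k, hki, hz'k⟩ := h.exists_le_mem (h.mem_iff.1 hz'j).1 (hBC hz'B)
  exact h.notMem_of_lt (hki.trans_lt hij) hz'j hz'k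

end IsGreedyPartition

section closedBall

variable {Z : Type*} [PseudoMetricSpace Z] {a y z : Z} {r : ℝ}

theorem sInf_dist_image_closedBall_le (hz : z ∈ closedBall y r) :
    sInf ((fun q => dist a q) '' closedBall y r) ≤ dist a z :=
  csInf_le ⟨0, by rintro _ ⟨q, -, rfl⟩; exact dist_nonneg⟩ (mem_image_of_mem _ hz)

theorem dist_le_sInf_dist_image_closedBall_add (hz : z ∈ closedBall y r) :
    dist a z ≤ sInf ((fun q => dist a q) '' closedBall y r) + 2 * r := by
  rw [← sub_le_iff_le_add]
  refine le_csInf ⟨_, mem_image_of_mem _ hz⟩ ?_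
  rintro _ ⟨q, hq, rfl⟩
  have := dist_triangle4 a q y z
  have := mem_closedBall.1 hq
  have := mem_closedBall'.1 hz
  linarith

end closedBall

namespace IsGreedyPartition

variable {Z ι : Type*} [PseudoMetricSpace Z] [Preorder ι] {P : Set Z} {c : ι → Z} {b : ι → ℝ}
  {blk : ι → Set Z} {y : Z} {r : ℝ} {i : ι}

theorem mem_Ico_of_nonterminal (h : IsGreedyPartition P (fun k => closedBall (c k) (b k)) blk)
    {j : ι} (hi : (blk i ∩ closedBall y r).Nonempty) (hij : i < j)
    (hj : (blk j ∩ closedBall y r).Nonempty) :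
    b i ∈ Ico (sInf ((fun q => dist (c i) q) '' closedBall y r))
        (sInf ((fun q => dist (c i) q) '' closedBall y r) + 2 * r) ∧
      ∃ z ∈ P ∩ closedBall y r, ∀ k, k < i → z ∉ closedBall (c k) (b k) := by
  obtain ⟨hfree, ⟨z, hzB, hzC⟩, hBC⟩ := h.of_nonterminal hi hij hj
  obtain ⟨z', hz'B, hz'C⟩ := not_subset.1 hBC
  refine ⟨⟨?_, ?_⟩, hfree⟩
  · exact (sInf_dist_image_closedBall_le hzB).trans (dist_comm (c i) z ▸ hzC)
  · rw [mem_closedBall, not_le, dist_comm] at hz'C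
    exact hz'C.trans_le (dist_le_sInf_dist_image_closedBall_add hz'B)

theorem terminal_of_sInf_add_le (h : IsGreedyPartition P (fun k => closedBall (c k) (b k)) blk)
    (hfree : ∃ z ∈ P ∩ closedBall y r, ∀ k, k < i → z ∉ closedBall (c k) (b k))
    (hb : sInf ((fun q => dist (c i) q) '' closedBall y r) + 2 * r ≤ b i) :
    (blk i ∩ closedBall y r).Nonempty ∧ ∀ j, i < j → ¬ (blk j ∩ closedBall y r).Nonempty :=
  h.terminal hfree fun z hz => by
    rw [mem_closedBall, dist_comm]
    exact (dist_le_sInf_dist_image_closedBall_add hz).trans hb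

end IsGreedyPartition

theorem isOpen_setOf_exists_forall_lt_dist {Z ι : Type*} [PseudoMetricSpace Z] [Finite ι]
    (S : Set Z) (p : ι → Z) : IsOpen {c : ι → ℝ | ∃ z ∈ S, ∀ j, c j < dist z (p j)} := by
  have : {c : ι → ℝ | ∃ z ∈ S, ∀ j, c j < dist z (p j)} =
      ⋃ z ∈ S, ⋂ j, {c | c j < dist z (p j)} := by
    ext; simp
  rw [this]
  exact isOpen_biUnion fun z _ =>
    isOpen_iInter_of_finite fun j => isOpen_lt (continuous_apply j) continuous_const

theorem ProbabilityTheory.iIndepFun.measure_preimage_inter_preimage_finset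
    {Ω ι : Type*} {κ : ι → Type*} [MeasurableSpace Ω] [∀ i, MeasurableSpace (κ i)]
    {μ : Measure Ω} [IsProbabilityMeasure μ] {X : ∀ i, Ω → κ i}
    (hX : iIndepFun X μ) (hXm : ∀ i, Measurable (X i)) {i : ι} {T : Finset ι} (hi : i ∉ T)
    {S : Set (κ i)} (hS : MeasurableSet S) {U : Set (∀ j : T, κ j)} (hU : MeasurableSet U) :
    μ (X i ⁻¹' S ∩ (fun ω (j : T) => X j ω) ⁻¹' U) =
      μ (X i ⁻¹' S) * μ ((fun ω (j : T) => X j ω) ⁻¹' U) := by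
  classical
  have hind := (hX.indepFun_finset {i} T (Finset.disjoint_singleton_left.2 hi) hXm).comp
    (measurable_pi_apply ⟨i, Finset.mem_singleton_self i⟩) measurable_id
  exact hind.measure_inter_preimage_eq_mul _ _ hS hU

theorem ProbabilityTheory.iIndepFun.measure_inter_exists_forall_notMem_closedBall
    {Ω ι Z : Type*} [MeasurableSpace Ω] {μ : Measure Ω} [IsProbabilityMeasure μ]
    [PseudoMetricSpace Z] [PartialOrder ι] [LocallyFiniteOrderBot ι] {β : ι → Ω → ℝ}
    (hβ : iIndepFun β μ) (hβm : ∀ i, Measurable (β i)) (Q : Set Z) (p : ι → Z) (i : ι)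
    {S : Set ℝ} (hS : MeasurableSet S) :
    μ (β i ⁻¹' S ∩ {ω | ∃ z ∈ Q, ∀ k, k < i → z ∉ closedBall (p k) (β k ω)}) =
      μ (β i ⁻¹' S) * μ {ω | ∃ z ∈ Q, ∀ k, k < i → z ∉ closedBall (p k) (β k ω)} := by
  have : {ω | ∃ z ∈ Q, ∀ k, k < i → z ∉ closedBall (p k) (β k ω)} =
      (fun ω (j : Finset.Iio i) => β j ω) ⁻¹' {c | ∃ z ∈ Q, ∀ j, c j < dist z (p j)} := by
    ext ω
    simp [mem_closedBall]
  rw [this]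
  exact hβ.measure_preimage_inter_preimage_finset hβm Finset.notMem_Iio_self hS
    (isOpen_setOf_exists_forall_lt_dist _ _).measurableSet

theorem withDensity_ofReal_apply_le {α : Type*} [MeasurableSpace α] {μ : Measure α}
    {f : α → ℝ} {s : Set α} (hs : MeasurableSet s) {v : ℝ} (hf : ∀ u ∈ s, f u ≤ v) :
    μ.withDensity (fun u => ENNReal.ofReal (f u)) s ≤ ENNReal.ofReal v * μ s := by
  rw [withDensity_apply _ hs, ← setLIntegral_const]
  exact setLIntegral_mono measurable_const fun u hu => ENNReal.ofReal_le_ofReal (hf u hu)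

theorem withDensity_ofReal_apply_eq {α : Type*} [MeasurableSpace α] {μ : Measure α}
    {f : α → ℝ} {s : Set α} (hs : MeasurableSet s) {v : ℝ} (hf : ∀ u ∈ s, f u = v) :
    μ.withDensity (fun u => ENNReal.ofReal (f u)) s = ENNReal.ofReal v * μ s := by
  rw [withDensity_apply _ hs, ← setLIntegral_const]
  exact setLIntegral_congr_fun hs fun u hu => by rw [hf u hu]

noncomputable def distMeasure (δ : ℝ) (L : ℕ) : Measure ℝ :=
  volume.withDensity fun x => ENNReal.ofReal (distDensity δ L x)

/-- The piece `[δ/8 + j·δ/(8L), δ/8 + (j+1)·δ/(8L))` containing `x` is `I_{j+1}` in the paper;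
left of `δ/8` the truncated floor gives `0`. -/
noncomputable def distPiece (δ : ℝ) (L : ℕ) (x : ℝ) : ℕ :=
  ⌊(x - δ / 8) / (δ / (8 * L))⌋₊

section distDensity

variable {δ : ℝ} {L : ℕ} {x : ℝ}

theorem div_four_sub_div_eq (δ : ℝ) (hL : 0 < L) :
    δ / 4 - δ / (8 * L) = δ / 8 + (L - 1) * (δ / (8 * L)) := by
  have : (L : ℝ) ≠ 0 := by positivity
  field_simp
  ring

theorem distDensity_of_lt (hx : x < δ / 8) : distDensity δ L x = 0 := by
  simp [distDensity, hx]

theorem distDensity_of_le_of_lt (hδ : 0 < δ) (hx₁ : δ / 8 ≤ x)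
    (hx₂ : x < δ / 4 - δ / (8 * L)) :
    distDensity δ L x = 8 * L / δ * (1 / 2) ^ (distPiece δ L x + 1) := by
  have : 0 ≤ δ / (8 * L) := by positivity
  rw [distDensity, if_neg (by rw [not_or, not_lt, not_lt]; constructor <;> linarith),
    if_neg hx₂.not_ge, Int.floor_toNat, distPiece]

theorem distDensity_of_le_of_le (hδ : 0 < δ) (hL : 0 < L) (hx₁ : δ / 4 - δ / (8 * L) ≤ x)
    (hx₂ : x ≤ δ / 4) : distDensity δ L x = 8 * L / δ * (1 / 2) ^ (L - 1) := by
  have : δ / (8 * L) ≤ δ / 8 :=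
    div_le_div_of_nonneg_left hδ.le (by norm_num) (by norm_cast; omega)
  rw [distDensity, if_neg (by rw [not_or, not_lt, not_lt]; constructor <;> linarith), if_pos hx₁]
  congr 1
  rw [one_div_pow, ← Nat.sub_add_cancel hL, pow_succ]
  field_simp
  simp

theorem distDensity_le_of_le (hδ : 0 < δ) {t : ℝ} (htx : t ≤ x)
    (hx : x < δ / 4 - δ / (8 * L)) :
    distDensity δ L x ≤ 8 * L / δ * (1 / 2) ^ (distPiece δ L t + 1) := by
  rcases lt_or_ge x (δ / 8) with hx8 | hx8
  · rw [distDensity_of_lt hx8]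
    positivity
  rw [distDensity_of_le_of_lt hδ hx8 hx]
  refine mul_le_mul_of_nonneg_left (pow_le_pow_of_le_one (by norm_num) (by norm_num) ?_)
    (by positivity)
  exact Nat.succ_le_succ (Nat.floor_mono (by gcongr))

theorem distPiece_eq (hδ : 0 < δ) (hL : 0 < L) {j : ℕ}
    (hx : x ∈ Ico (δ / 8 + j * (δ / (8 * L))) (δ / 8 + (j + 1) * (δ / (8 * L)))) :
    distPiece δ L x = j := by
  have hw : 0 < δ / (8 * L) := by positivity
  have hx₀ : 0 ≤ x - δ / 8 := by nlinarith [hx.1, j.cast_nonneg (α := ℝ)]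
  rw [distPiece, Nat.floor_eq_iff (div_nonneg hx₀ hw.le), le_div_iff₀ hw, div_lt_iff₀ hw]
  constructor <;> linarith [hx.1, hx.2]

theorem lt_distPiece_add_one_mul (hδ : 0 < δ) (hL : 0 < L) (x : ℝ) :
    x < δ / 8 + (distPiece δ L x + 1) * (δ / (8 * L)) := by
  have := Nat.lt_floor_add_one ((x - δ / 8) / (δ / (8 * L)))
  rw [div_lt_iff₀ (by positivity)] at this
  rw [distPiece]
  linarith

theorem distMeasure_Ico_piece (hδ : 0 < δ) {j : ℕ} (hj : j + 2 ≤ L) :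
    distMeasure δ L (Ico (δ / 8 + j * (δ / (8 * L))) (δ / 8 + (j + 1) * (δ / (8 * L)))) =
      ENNReal.ofReal ((1 / 2) ^ (j + 1)) := by
  have hL : (0 : ℝ) < L := by norm_cast; omega
  have hjL : (j : ℝ) + 2 ≤ L := by exact_mod_cast hj
  have hw : 0 < δ / (8 * L) := by positivity
  rw [distMeasure,
    withDensity_ofReal_apply_eq measurableSet_Ico (v := 8 * L / δ * (1 / 2) ^ (j + 1)),
    Real.volume_Ico, ← ENNReal.ofReal_mul (by positivity)]
  · congr 1
    field_simp
    ring
  · intro u hu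
    rw [distDensity_of_le_of_lt hδ (by nlinarith [hu.1, j.cast_nonneg (α := ℝ)]),
      distPiece_eq hδ (by omega) hu]
    rw [div_four_sub_div_eq δ (by omega)]
    nlinarith [hu.2]

theorem distMeasure_Ico_last (hδ : 0 < δ) (hL : 0 < L) :
    distMeasure δ L (Ico (δ / 8 + (L - 1 : ℕ) * (δ / (8 * L))) (δ / 8 + L * (δ / (8 * L)))) =
      ENNReal.ofReal ((1 / 2) ^ (L - 1)) := by
  have hL' : (0 : ℝ) < L := by exact_mod_cast hL
  rw [Nat.cast_sub hL, Nat.cast_one, distMeasure,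
    withDensity_ofReal_apply_eq measurableSet_Ico (v := 8 * L / δ * (1 / 2) ^ (L - 1)),
    Real.volume_Ico, ← ENNReal.ofReal_mul (by positivity)]
  · congr 1
    field_simp
    ring
  · intro u hu
    have : δ / 4 = δ / 8 + L * (δ / (8 * L)) := by field_simp; ring
    refine distDensity_of_le_of_le hδ hL ?_ (by linarith [hu.2])
    rw [div_four_sub_div_eq δ hL]
    exact hu.1

theorem ofReal_le_distMeasure_Ici (hδ : 0 < δ) (hL : 0 < L) {j : ℕ} (hj : j ≤ L - 1) :
    ENNReal.ofReal ((1 / 2) ^ j) ≤ distMeasure δ L (Ici (δ / 8 + j * (δ / (8 * L)))) := by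
  induction hj using Nat.decreasingInduction with
  | self =>
    rw [← distMeasure_Ico_last hδ hL]
    exact measure_mono Ico_subset_Ici_self
  | of_succ k hk ih =>
    have hw : 0 < δ / (8 * L) := by positivity
    have hsplit : δ / 8 + k * (δ / (8 * L)) ≤ δ / 8 + (k + 1) * (δ / (8 * L)) := by nlinarith
    push_cast at ih
    rw [← Ico_union_Ici_eq_Ici hsplit,
      measure_union ((Iio_disjoint_Ici le_rfl).mono_left Ico_subset_Iio_self) measurableSet_Ici,
      distMeasure_Ico_piece hδ (by omega)]
    calc ENNReal.ofReal ((1 / 2) ^ k)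
        = ENNReal.ofReal ((1 / 2) ^ (k + 1)) + ENNReal.ofReal ((1 / 2) ^ (k + 1)) := by
          rw [← ENNReal.ofReal_add (by positivity) (by positivity), pow_succ]; ring_nf
      _ ≤ _ := by gcongr

theorem ofReal_le_distMeasure_Ici_of_lt (hδ : 0 < δ) (hL : 2 ≤ L) {t : ℝ}
    (ht : t < δ / 4 - δ / (8 * L)) :
    ENNReal.ofReal ((1 / 2) ^ (distPiece δ L t + 1)) ≤ distMeasure δ L (Ici t) := by
  have hw : 0 < δ / (8 * L) := by positivity
  have hidx : distPiece δ L t + 1 ≤ L - 1 := by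
    refine Nat.succ_le_of_lt ((Nat.floor_lt' (by omega)).2 ?_)
    rw [Nat.cast_sub (by omega), Nat.cast_one, div_lt_iff₀ hw]
    rw [div_four_sub_div_eq δ (by omega)] at ht
    linarith
  refine (ofReal_le_distMeasure_Ici hδ (by omega) hidx).trans
    (measure_mono (Ici_subset_Ici.2 ?_))
  push_cast
  exact (lt_distPiece_add_one_mul hδ (by omega : 0 < L) t).le

end distDensity

theorem distMeasure_Ico_le_mul_Ici {δ : ℝ} {L : ℕ} (hδ : 0 < δ) (hL : 2 ≤ L) {r x : ℝ}
    (hr₀ : 0 ≤ r) (hr : r ≤ δ / (16 * L)) (hx : x < δ / 8 + (L - 2) * (δ / (8 * L))) :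
    distMeasure δ L (Ico x (x + 2 * r)) ≤
      ENNReal.ofReal (32 * r * L / δ) * distMeasure δ L (Ici (x + 2 * r)) := by
  have hL' : (0 : ℝ) < L := by norm_cast; omega
  set w := δ / (8 * L) with hw_def
  have hw : 0 < w := by positivity
  have h2r : 2 * r ≤ w := by rw [hw_def]; rw [le_div_iff₀ (by positivity)] at hr ⊢; linarith
  have hend : x + 2 * r < δ / 4 - w := by
    rw [div_four_sub_div_eq δ (by omega)]
    linarith
  set k := distPiece δ L x
  have hstep : distPiece δ L (x + 2 * r) ≤ k + 1 := by
    refine Nat.lt_succ_iff.1 ((Nat.floor_lt' (by omega)).2 ?_)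
    have := lt_distPiece_add_one_mul hδ (by omega : 0 < L) x
    rw [div_lt_iff₀ hw]
    push_cast
    linarith
  calc distMeasure δ L (Ico x (x + 2 * r))
      ≤ ENNReal.ofReal (8 * L / δ * (1 / 2) ^ (k + 1)) * volume (Ico x (x + 2 * r)) :=
        withDensity_ofReal_apply_le measurableSet_Ico
          fun u hu => distDensity_le_of_le hδ hu.1 (hu.2.trans hend)
    _ = ENNReal.ofReal (32 * r * L / δ) * ENNReal.ofReal ((1 / 2) ^ (k + 2)) := by
        rw [Real.volume_Ico, ← ENNReal.ofReal_mul (by positivity),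
          ← ENNReal.ofReal_mul (by positivity)]
        congr 1
        ring
    _ ≤ ENNReal.ofReal (32 * r * L / δ) *
          ENNReal.ofReal ((1 / 2) ^ (distPiece δ L (x + 2 * r) + 1)) := by
        refine mul_le_mul_right (ENNReal.ofReal_le_ofReal ?_) _
        exact pow_le_pow_of_le_one (by norm_num) (by norm_num) (by omega)
    _ ≤ _ := by gcongr; exact ofReal_le_distMeasure_Ici_of_lt hδ hL hend

theorem near_nonterminal_le_terminal_general
    (Z : Type) [MetricSpace Z]
    (m : ℕ) (p : Fin m → Z)
    (P : Set Z) (hdiam : 0 < Metric.diam P)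
    (L : ℕ) (hL : 2 ≤ L)
    (Ω : Type) [MeasurableSpace Ω] (μ : Measure Ω) [IsProbabilityMeasure μ]
    (β : Fin m → Ω → ℝ) (hβmeas : ∀ i, Measurable (β i))
    (hindep : ProbabilityTheory.iIndepFun β μ)
    (hlaw : ∀ i, Measure.map (β i) μ =
      volume.withDensity (fun x => ENNReal.ofReal (distDensity (Metric.diam P) L x)))
    (Pblk : Fin m → Ω → Set Z)
    (hPblk : ∀ ω i, Pblk i ω =
      {x | x ∈ P ∧ (∀ j, j < i → x ∉ Pblk j ω) ∧ dist x (p i) ≤ β i ω})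
    (y : Z) (r : ℝ) (hr0 : 0 ≤ r) (hr1 : r ≤ Metric.diam P / (16 * (L:ℝ)))
    (i : Fin m)
    (hnear : sInf ((fun q => dist (p i) q) '' Metric.closedBall y r)
      < Metric.diam P / 8 + ((L:ℝ) - 2) * (Metric.diam P / (8 * (L:ℝ)))) :
    (μ {ω | (Pblk i ω ∩ Metric.closedBall y r).Nonempty ∧
        ∃ j, i < j ∧ (Pblk j ω ∩ Metric.closedBall y r).Nonempty}).toReal
      ≤ (32 * r * (L:ℝ) / Metric.diam P) *
        (μ {ω | (Pblk i ω ∩ Metric.closedBall y r).Nonempty ∧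
            ∀ j, i < j → ¬ (Pblk j ω ∩ Metric.closedBall y r).Nonempty}).toReal := by
  set δ := Metric.diam P
  set B := closedBall y r
  set x := sInf ((fun q => dist (p i) q) '' B)
  set C := 32 * r * L / δ
  have hgreedy : ∀ ω, IsGreedyPartition P (fun k => closedBall (p k) (β k ω))
      (fun k => Pblk k ω) := fun ω => hPblk ω
  set A : Set Ω := {ω | ∃ z ∈ P ∩ B, ∀ k, k < i → z ∉ closedBall (p k) (β k ω)}
  have hlawA : ∀ S, MeasurableSet S → μ (β i ⁻¹' S ∩ A) = distMeasure δ L S * μ A :=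
    fun S hS => by
      rw [hindep.measure_inter_exists_forall_notMem_closedBall hβmeas _ _ _ hS,
        ← Measure.map_apply (hβmeas i) hS, hlaw i]
      rfl
  have hnonterm : {ω | (Pblk i ω ∩ B).Nonempty ∧ ∃ j, i < j ∧ (Pblk j ω ∩ B).Nonempty} ⊆
      β i ⁻¹' Ico x (x + 2 * r) ∩ A :=
    fun ω ⟨hi, j, hij, hj⟩ => (hgreedy ω).mem_Ico_of_nonterminal hi hij hj
  have hterm : β i ⁻¹' Ici (x + 2 * r) ∩ A ⊆
      {ω | (Pblk i ω ∩ B).Nonempty ∧ ∀ j, i < j → ¬ (Pblk j ω ∩ B).Nonempty} :=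
    fun ω ⟨hβ, hω⟩ => (hgreedy ω).terminal_of_sInf_add_le hω hβ
  have hmain : μ {ω | (Pblk i ω ∩ B).Nonempty ∧ ∃ j, i < j ∧ (Pblk j ω ∩ B).Nonempty} ≤
      ENNReal.ofReal C *
        μ {ω | (Pblk i ω ∩ B).Nonempty ∧ ∀ j, i < j → ¬ (Pblk j ω ∩ B).Nonempty} :=
    calc _ ≤ μ (β i ⁻¹' Ico x (x + 2 * r) ∩ A) := measure_mono hnonterm
      _ = distMeasure δ L (Ico x (x + 2 * r)) * μ A := hlawA _ measurableSet_Ico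
      _ ≤ ENNReal.ofReal C * distMeasure δ L (Ici (x + 2 * r)) * μ A := by
        gcongr
        exact distMeasure_Ico_le_mul_Ici hdiam hL hr0 hr1 hnear
      _ = ENNReal.ofReal C * μ (β i ⁻¹' Ici (x + 2 * r) ∩ A) := by
        rw [hlawA _ measurableSet_Ici, mul_assoc]
      _ ≤ _ := by gcongr
  rw [← ENNReal.toReal_ofReal (by positivity : 0 ≤ C), ← ENNReal.toReal_mul]
  exact ENNReal.toReal_mono (ENNReal.mul_ne_top ENNReal.ofReal_ne_top (measure_ne_top μ _)) hmain

/-- In the setting of the random partition (blocks `P_1, …, P_m` built from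
independent `β_1, …, β_m` with density `f = distDensity (diam P) L`, where
`n = 2^L ≥ max(m,4)` is a power of two and `L = log₂ n`), fix `y ∈ Z`,
`0 ≤ r ≤ diam(P)/(16L)` and an index `i`.  Let
`x_i = min {d(p_i,q) : q ∈ Z, d(q,y) ≤ r}`.  If
`x_i < diam(P)/8 + (L-2)·diam(P)/(8L)` (i.e. `p_i` is *near* the ball
`B(y,r)`), then
`Pr[P_i non-terminally intersects B(y,r)] ≤ (32 r L / diam P) · Pr[P_i
terminally intersects B(y,r)]`. -/
theorem near_nonterminal_le_terminal
    (Z : Type) [MetricSpace Z] [Finite Z]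
    (m : ℕ) (hm : 2 ≤ m) (p : Fin m → Z) (hp : Function.Injective p)
    (P : Set Z) (hP : P = Set.range p) (hdiam : 0 < Metric.diam P)
    (L : ℕ) (hL : 2 ≤ L) (hmn : m ≤ 2^L)
    (Ω : Type) [MeasurableSpace Ω] (μ : Measure Ω) [IsProbabilityMeasure μ]
    (β : Fin m → Ω → ℝ) (hβmeas : ∀ i, Measurable (β i))
    (hindep : ProbabilityTheory.iIndepFun β μ)
    (hlaw : ∀ i, Measure.map (β i) μ =
      volume.withDensity (fun x => ENNReal.ofReal (distDensity (Metric.diam P) L x)))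
    (Pblk : Fin m → Ω → Set Z)
    (hPblk : ∀ ω i, Pblk i ω =
      {x | x ∈ P ∧ (∀ j, j < i → x ∉ Pblk j ω) ∧ dist x (p i) ≤ β i ω})
    (y : Z) (r : ℝ) (hr0 : 0 ≤ r) (hr1 : r ≤ Metric.diam P / (16 * (L:ℝ)))
    (i : Fin m)
    (hnear : sInf ((fun q => dist (p i) q) '' Metric.closedBall y r)
      < Metric.diam P / 8 + ((L:ℝ) - 2) * (Metric.diam P / (8 * (L:ℝ)))) :
    (μ {ω | (Pblk i ω ∩ Metric.closedBall y r).Nonempty ∧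
        ∃ j, i < j ∧ (Pblk j ω ∩ Metric.closedBall y r).Nonempty}).toReal
      ≤ (32 * r * (L:ℝ) / Metric.diam P) *
        (μ {ω | (Pblk i ω ∩ Metric.closedBall y r).Nonempty ∧
            ∀ j, i < j → ¬ (Pblk j ω ∩ Metric.closedBall y r).Nonempty}).toReal :=
  near_nonterminal_le_terminal_general Z m p P hdiam L hL Ω μ β hβmeas hindep hlaw Pblk hPblk y r
    hr0 hr1 i hnear
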